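/- arXiv:2504.19721 — 2 statements merged into one kernel-verified Lean document; each statement's English description precedes it below -/
import Mathlib

section
/- The second differential of φ(v) = Σ_{n=1}^∞ cos(n v_n)/n⁴ at v = 0 is given by d²φ(0)[w,z] = -Σ_{n=1}^∞ w_n z_n / n², and the associated operator ℓ² → ℓ², w ↦ (-w_n/n²)_n, is injective. -/
/-! Each term of `φ` depends on one coordinate only: it is `g ∘ ℓ` for a scalar function `g`
and the norm-one functional `ℓ v = v n`, so its first two derivatives are `g' (ℓ v) • ℓ` and
`g'' (ℓ v) • ℓ ⊗ ℓ`. For `g x = cos ((n+1) x) / (n+1)⁴` these are bounded by `(n+1)⁻³` and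
`(n+1)⁻²` uniformly in `v`, both summable, so the series can be differentiated term by term
twice, and at `0` the second derivative is `∑ w_n z_n g''(0) = -∑ w_n z_n / (n+1)²`. -/

open Real ContinuousLinearMap

theorem lp.norm_evalCLM_le {𝕜 α : Type*} {E : α → Type*} [NontriviallyNormedField 𝕜]
    [∀ i, NormedAddCommGroup (E i)] [∀ i, NormedSpace 𝕜 (E i)] {p : ENNReal} [Fact (1 ≤ p)]
    (i : α) : ‖lp.evalCLM 𝕜 E p i‖ ≤ 1 :=
  LinearMap.mkContinuous_norm_le _ zero_le_one _

@[simp]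
theorem lp.evalCLM_apply {𝕜 α : Type*} {E : α → Type*} [NontriviallyNormedField 𝕜]
    [∀ i, NormedAddCommGroup (E i)] [∀ i, NormedSpace 𝕜 (E i)] {p : ENNReal} [Fact (1 ≤ p)]
    (i : α) (f : lp E p) : lp.evalCLM 𝕜 E p i f = f i :=
  rfl

theorem summable_one_div_nat_add_one_pow {p : ℕ} (hp : 1 < p) :
    Summable fun n : ℕ => 1 / ((n : ℝ) + 1) ^ p :=
  ((summable_nat_add_iff 1).mpr (Real.summable_one_div_nat_pow.mpr hp)).congr fun n => by
    push_cast; rfl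

theorem norm_div_pow_le_one_div_pow {t a : ℝ} (ht : |t| ≤ 1) (ha : 0 < a) (k : ℕ) :
    ‖t / a ^ k‖ ≤ 1 / a ^ k := by
  rw [norm_div, norm_pow, Real.norm_eq_abs, Real.norm_eq_abs, abs_of_pos ha]
  gcongr

theorem hasDerivAt_cos_mul_div_pow {a : ℝ} (ha : a ≠ 0) (k : ℕ) (x : ℝ) :
    HasDerivAt (fun x => cos (a * x) / a ^ (k + 1)) (-sin (a * x) / a ^ k) x := by
  refine ((hasDerivAt_const_mul a).cos.div_const (a ^ (k + 1))).congr_deriv ?_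
  field_simp
  ring

theorem hasDerivAt_neg_sin_mul_div_pow {a : ℝ} (ha : a ≠ 0) (k : ℕ) (x : ℝ) :
    HasDerivAt (fun x => -sin (a * x) / a ^ (k + 1)) (-cos (a * x) / a ^ k) x := by
  refine ((hasDerivAt_const_mul a).sin.neg.div_const (a ^ (k + 1))).congr_deriv ?_
  field_simp
  ring

section SeriesAlongFunctionals

variable {𝕜 E F α : Type*} [NontriviallyNormedField 𝕜]
  [NormedAddCommGroup E] [NormedSpace 𝕜 E] [NormedAddCommGroup F] [NormedSpace 𝕜 F]
  {ℓ : α → StrongDual 𝕜 E} {C : ℝ} {g g' g'' : α → 𝕜 → F} {u u' : α → ℝ}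

theorem norm_smulRight_le_mul (hℓ : ∀ n, ‖ℓ n‖ ≤ C) (hg' : ∀ n x, ‖g' n x‖ ≤ u n)
    (n : α) (x : 𝕜) : ‖(ℓ n).smulRight (g' n x)‖ ≤ C * u n := by
  rw [norm_smulRight_apply]
  exact mul_le_mul (hℓ n) (hg' n x) (norm_nonneg _) ((norm_nonneg _).trans (hℓ n))

variable [CompleteSpace F]

theorem summable_smulRight_comp (hu : Summable u) (hℓ : ∀ n, ‖ℓ n‖ ≤ C)
    (hg' : ∀ n x, ‖g' n x‖ ≤ u n) (v : E) :
    Summable fun n => (ℓ n).smulRight (g' n (ℓ n v)) :=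
  (hu.mul_left C).of_norm_bounded fun n => norm_smulRight_le_mul hℓ hg' n _

variable [IsRCLikeNormedField 𝕜]

theorem hasFDerivAt_tsum_comp (hu : Summable u) (hℓ : ∀ n, ‖ℓ n‖ ≤ C)
    (hg : ∀ n x, HasDerivAt (g n) (g' n x) x) (hg' : ∀ n x, ‖g' n x‖ ≤ u n) {x₀ : E}
    (hg0 : Summable fun n => g n (ℓ n x₀)) (v : E) :
    HasFDerivAt (fun v => ∑' n, g n (ℓ n v)) (∑' n, (ℓ n).smulRight (g' n (ℓ n v))) v := by
  refine hasFDerivAt_tsum (hu.mul_left C)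
    (fun n v => (hg n (ℓ n v)).hasFDerivAt.comp v (ℓ n).hasFDerivAt)
    (fun n v => norm_smulRight_le_mul hℓ hg' n _) hg0 v

theorem fderiv_fderiv_tsum_comp_apply (hu : Summable u) (hu' : Summable u')
    (hℓ : ∀ n, ‖ℓ n‖ ≤ C) (hg : ∀ n x, HasDerivAt (g n) (g' n x) x)
    (hg' : ∀ n x, HasDerivAt (g' n) (g'' n x) x) (hg'_le : ∀ n x, ‖g' n x‖ ≤ u n)
    (hg''_le : ∀ n x, ‖g'' n x‖ ≤ u' n) {x₀ : E} (hg0 : Summable fun n => g n (ℓ n x₀))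
    (v w z : E) :
    fderiv 𝕜 (fderiv 𝕜 fun v => ∑' n, g n (ℓ n v)) v w z =
      ∑' n, ℓ n w • ℓ n z • g'' n (ℓ n v) := by
  have hD : fderiv 𝕜 (fun v => ∑' n, g n (ℓ n v)) =
      fun v => ∑' n, (ℓ n).smulRight (g' n (ℓ n v)) :=
    funext fun v => (hasFDerivAt_tsum_comp hu hℓ hg hg'_le hg0 v).fderiv
  have hsmulRight : ∀ n x, HasDerivAt (fun x => (ℓ n).smulRight (g' n x))
      ((ℓ n).smulRight (g'' n x)) x := fun n x =>
    (smulRightL 𝕜 E F (ℓ n)).hasFDerivAt.comp_hasDerivAt x (hg' n x)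
  have hsmulRight_le := norm_smulRight_le_mul hℓ hg''_le
  have hD2 := hasFDerivAt_tsum_comp (hu'.mul_left C) hℓ hsmulRight hsmulRight_le
    (summable_smulRight_comp hu hℓ hg'_le x₀) v
  have hsum := summable_smulRight_comp (hu'.mul_left C) hℓ hsmulRight_le v
  rw [hD, hD2.fderiv]
  simpa using ((apply 𝕜 F z).comp (apply 𝕜 (E →L[𝕜] F) w)).map_tsum hsum

end SeriesAlongFunctionals

/-- the second differential of φ(v) = Σ_{n≥1} cos(n v_n)/n⁴ at 0 is
d²φ(0)[w,z] = -Σ_{n≥1} w_n z_n / n², and the associated operator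
w ↦ (-w_n/n²)_n is injective.
(ℓ² is indexed by `n : ℕ`, index `n` representing the paper's index `n+1 ≥ 1`.) -/
theorem stmt_2 :
    (∀ w z : lp (fun _ : ℕ => ℝ) 2,
      iteratedFDeriv ℝ 2
        (fun v : lp (fun _ : ℕ => ℝ) 2 =>
          ∑' n : ℕ, Real.cos (((n : ℝ) + 1) * v n) / ((n : ℝ) + 1) ^ 4)
        0 ![w, z]
        = -∑' n : ℕ, w n * z n / ((n : ℝ) + 1) ^ 2) ∧
    Function.Injective
      (fun (w : lp (fun _ : ℕ => ℝ) 2) (n : ℕ) => -(w n) / ((n : ℝ) + 1) ^ 2) := by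
  have hpos (n : ℕ) : (0 : ℝ) < n + 1 := n.cast_add_one_pos
  refine ⟨fun w z => ?_, fun w z h => lp.ext <| funext fun n => ?_⟩
  · have hφ0 : Summable fun n : ℕ => cos (((n : ℝ) + 1) * 0) / ((n : ℝ) + 1) ^ 4 :=
      (summable_one_div_nat_add_one_pow (by norm_num)).of_norm_bounded fun n =>
        norm_div_pow_le_one_div_pow (abs_cos_le_one _) (hpos n) 4
    rw [iteratedFDeriv_two_apply]
    refine (fderiv_fderiv_tsum_comp_apply (ℓ := lp.evalCLM ℝ (fun _ : ℕ => ℝ) 2)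
      (g := fun n x => cos (((n : ℝ) + 1) * x) / ((n : ℝ) + 1) ^ (3 + 1))
      (summable_one_div_nat_add_one_pow (p := 3) (by norm_num))
      (summable_one_div_nat_add_one_pow (p := 2) (by norm_num)) lp.norm_evalCLM_le
      (fun n => hasDerivAt_cos_mul_div_pow (hpos n).ne' 3)
      (fun n => hasDerivAt_neg_sin_mul_div_pow (hpos n).ne' 2)
      (fun n x => norm_div_pow_le_one_div_pow ((abs_neg _).trans_le (abs_sin_le_one _)) (hpos n) 3)
      (fun n x => norm_div_pow_le_one_div_pow ((abs_neg _).trans_le (abs_cos_le_one _)) (hpos n) 2)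
      (x₀ := 0) hφ0 0 w z).trans ?_
    rw [← tsum_neg]
    refine tsum_congr fun n => ?_
    simp only [lp.evalCLM_apply, ZeroMemClass.coe_zero, PreLp.zero_apply, mul_zero, cos_zero,
      smul_eq_mul]
    ring
  · simpa [(hpos n).ne'] using congrFun h n
end

section
/- The point 0 is not isolated in the critical set of φ(v) = Σ_{n=1}^∞ cos(n v_n)/n⁴ on ℓ²(ℕ): for every ε > 0 there exists a critical point v ≠ 0 of φ with ‖v‖_{ℓ²} < ε. -/
/-!
At a point `v` with `sin ((n + 1) * v n) = 0` for every `n`, each summand of `φ` sits at a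
critical point of the cosine, so `|cos (a + h) - cos a| ≤ h² / 2` bounds
`|φ (v + w) - φ v|` by `‖w‖² / 2`; hence `dφ(v) = 0`. The points `(π / (m + 1)) • e_m` are of
this kind and their norms tend to `0`.
-/

open Real Filter Asymptotics

theorem Real.abs_cos_add_sub_cos_le_of_sin_eq_zero {a : ℝ} (ha : sin a = 0) (h : ℝ) :
    |cos (a + h) - cos a| ≤ h ^ 2 / 2 := by
  have hcos : cos (a + h) - cos a = cos a * (cos h - 1) := by rw [cos_add, ha]; ring
  rw [hcos, abs_mul, abs_sub_comm, abs_of_nonneg (sub_nonneg.2 (cos_le_one h))]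
  calc |cos a| * (1 - cos h) ≤ 1 * (h ^ 2 / 2) :=
        mul_le_mul (abs_cos_le_one a) (by linarith [one_sub_sq_div_two_le_cos (x := h)])
          (sub_nonneg.2 (cos_le_one h)) zero_le_one
    _ = h ^ 2 / 2 := one_mul _

theorem lp.hasSum_norm_sq {ι : Type*} {E : ι → Type*} [∀ i, NormedAddCommGroup (E i)]
    (f : lp E 2) : HasSum (fun i => ‖f i‖ ^ 2) (‖f‖ ^ 2) := by
  simpa [Real.rpow_two] using lp.hasSum_norm (p := 2) (by norm_num) f

theorem hasFDerivAt_zero_of_norm_sub_le_sq {𝕜 E F : Type*} [NontriviallyNormedField 𝕜]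
    [NormedAddCommGroup E] [NormedSpace 𝕜 E] [NormedAddCommGroup F] [NormedSpace 𝕜 F]
    {f : E → F} {x : E} {C : ℝ} (hf : ∀ h, ‖f (x + h) - f x‖ ≤ C * ‖h‖ ^ 2) :
    HasFDerivAt f (0 : E →L[𝕜] F) x := by
  rw [hasFDerivAt_iff_isLittleO_nhds_zero]
  simp only [zero_apply, sub_zero]
  refine IsBigO.trans_isLittleO ?_ (isLittleO_norm_pow_id one_lt_two)
  exact IsBigO.of_bound C (Eventually.of_forall fun h => by simpa using hf h)

noncomputable def phi (x : lp (fun _ : ℕ => ℝ) 2) : ℝ :=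
  ∑' n : ℕ, cos (((n : ℝ) + 1) * x n) / ((n : ℝ) + 1) ^ 4

theorem summable_cos_mul_div_pow_four (x : ℕ → ℝ) :
    Summable (fun n : ℕ => cos (((n : ℝ) + 1) * x n) / ((n : ℝ) + 1) ^ 4) := by
  have hsum : Summable (fun n : ℕ => 1 / ((n : ℝ) + 1) ^ 4) := by
    exact_mod_cast (summable_nat_add_iff 1).2 (summable_one_div_nat_pow.2 (by norm_num : 1 < 4))
  refine Summable.of_norm_bounded hsum fun n => ?_
  rw [norm_div, norm_of_nonneg (by positivity : (0 : ℝ) ≤ ((n : ℝ) + 1) ^ 4)]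
  gcongr
  exact abs_cos_le_one _

theorem abs_phi_add_sub_le {v : lp (fun _ : ℕ => ℝ) 2}
    (hv : ∀ n : ℕ, sin (((n : ℝ) + 1) * v n) = 0) (w : lp (fun _ : ℕ => ℝ) 2) :
    ‖phi (v + w) - phi v‖ ≤ 1 / 2 * ‖w‖ ^ 2 := by
  have hterm (n : ℕ) :
      ‖cos (((n : ℝ) + 1) * (v + w) n) / ((n : ℝ) + 1) ^ 4
        - cos (((n : ℝ) + 1) * v n) / ((n : ℝ) + 1) ^ 4‖ ≤ ‖w n‖ ^ 2 / 2 := by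
    have hk : (1 : ℝ) ≤ (n : ℝ) + 1 := le_add_of_nonneg_left n.cast_nonneg
    have hvw : (v + w) n = v n + w n := rfl
    rw [← sub_div, norm_div, norm_of_nonneg (by positivity : (0 : ℝ) ≤ ((n : ℝ) + 1) ^ 4),
      hvw, mul_add, norm_eq_abs, norm_eq_abs, sq_abs, div_le_iff₀ (by positivity)]
    calc |cos (((n : ℝ) + 1) * v n + ((n : ℝ) + 1) * w n) - cos (((n : ℝ) + 1) * v n)|
        ≤ (((n : ℝ) + 1) * w n) ^ 2 / 2 := abs_cos_add_sub_cos_le_of_sin_eq_zero (hv n) _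
      _ = w n ^ 2 / 2 * ((n : ℝ) + 1) ^ 2 := by ring
      _ ≤ w n ^ 2 / 2 * ((n : ℝ) + 1) ^ 4 := by gcongr; norm_num
  unfold phi
  rw [← (summable_cos_mul_div_pow_four _).tsum_sub (summable_cos_mul_div_pow_four _),
    one_div_mul_eq_div]
  exact tsum_of_norm_bounded ((lp.hasSum_norm_sq w).div_const 2) hterm

theorem hasFDerivAt_phi_of_sin_eq_zero {v : lp (fun _ : ℕ => ℝ) 2}
    (hv : ∀ n : ℕ, sin (((n : ℝ) + 1) * v n) = 0) : HasFDerivAt phi (0 : _ →L[ℝ] ℝ) v :=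
  hasFDerivAt_zero_of_norm_sub_le_sq (abs_phi_add_sub_le hv)

/-- ℓ² is indexed by `n : ℕ`, index `n` standing for the paper's index `n + 1 ≥ 1`. -/
theorem stmt_3 :
    ∀ ε : ℝ, 0 < ε → ∃ v : lp (fun _ : ℕ => ℝ) 2, v ≠ 0 ∧ ‖v‖ < ε ∧
      fderiv ℝ
        (fun v : lp (fun _ : ℕ => ℝ) 2 =>
          ∑' n : ℕ, Real.cos (((n : ℝ) + 1) * v n) / ((n : ℝ) + 1) ^ 4)
        v = 0 := by
  intro ε hε
  obtain ⟨m, hm⟩ := exists_nat_gt (π / ε)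
  have hm1 : (0 : ℝ) < (m : ℝ) + 1 := by positivity
  set a : ℝ := π / ((m : ℝ) + 1)
  have ha : 0 < a := by positivity
  have hnorm : ‖lp.single (E := fun _ : ℕ => ℝ) 2 m a‖ = a := by
    rw [lp.norm_single (by norm_num), norm_of_nonneg ha.le]
  refine ⟨lp.single (E := fun _ : ℕ => ℝ) 2 m a, ?_, ?_, (hasFDerivAt_phi_of_sin_eq_zero fun n => ?_).fderiv⟩
  · exact fun h => ha.ne' (by simpa [hnorm] using congrArg norm h)
  · rw [hnorm, div_lt_iff₀ hm1, ← div_lt_iff₀' hε]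
    linarith
  · rcases eq_or_ne n m with rfl | hnm
    · rw [lp.single_apply_self, mul_div_cancel₀ _ hm1.ne', sin_pi]
    · rw [lp.single_apply_ne (E := fun _ : ℕ => ℝ) 2 m a hnm, mul_zero, sin_zero]
end
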